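/- (Variance of the deformed Heine variable) Let $0<q<1$, $\lambda>0$, and let $X$ follow the Heine distribution with probability function $f_X^H(x)= \frac{q^{\binom{x}{2}}\lambda^x}{[x]_q!}\prod_{i=1}^{\infty}(1+\lambda(1-q)q^{i-1})^{-1}$, $x=0,1,2,\ldots$. Then the variance of the deformed random variable $[X]_{1/q}$ is $V\big([X]_{1/q}\big)=\sum_{x=0}^{\infty}\big([x]_{1/q}-\lambda\big)^2 f_X^H(x) = \frac{1-q}{q}\,\lambda^2 + \lambda$. -/

import Mathlib

open scoped BigOperators

/-- The `q`-factorial `[n]_q! = ∏_{k=1}^n (1-q^k)/(1-q)`. -/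
noncomputable def qFact (q : ℝ) (n : ℕ) : ℝ :=
  ∏ k ∈ Finset.range n, (1 - q ^ (k + 1)) / (1 - q)

/-- The deformed value `[x]_{1/q} = (q^{-x}-1)/(q^{-1}-1)`. -/
noncomputable def qDef (q : ℝ) (x : ℕ) : ℝ := (q⁻¹ ^ x - 1) / (q⁻¹ - 1)

/-!
Write `w_t(x) = q^{x(x-1)/2} t^x / [x]_q!` and `E(t) = ∑ₓ w_t(x)`. The weights satisfy
`[x+1]_{1/q} w_λ(x+1) = λ w_λ(x)` and `[x+1]_{1/q} = 1 + q⁻¹ [x]_{1/q}`, so the first two moments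
of `[X]_{1/q}` against `w_λ` are `λ E(λ)` and `(λ + λ²/q) E(λ)`, and the centred second moment is
`((1-q)/q λ² + λ) E(λ)`. It remains to see that `E(λ)` is the normalising product (Euler's
identity): comparing `w_t` with `w_{qt}` termwise gives `E(t) = (1 + t(1-q)) E(qt)`, hence
`E(t) = ∏_{i<N} (1 + t(1-q)qⁱ) · E(q^N t)`, and `E(q^N t) → E(0) = 1` by dominated convergence.
-/

open Filter Topology Finset

noncomputable def heineWeight (q t : ℝ) (x : ℕ) : ℝ := q ^ (x * (x - 1) / 2) * t ^ x / qFact q x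

variable {q : ℝ}

lemma qFact_pos (hq0 : 0 ≤ q) (hq1 : q < 1) (n : ℕ) : 0 < qFact q n :=
  prod_pos fun k _ => div_pos (sub_pos.2 (pow_lt_one₀ hq0 hq1 k.succ_ne_zero)) (sub_pos.2 hq1)

lemma qDef_zero : qDef q 0 = 0 := by simp [qDef]

lemma qDef_succ (hq : q ≠ 1) (x : ℕ) : qDef q (x + 1) = 1 + q⁻¹ * qDef q x := by
  have : q⁻¹ - 1 ≠ 0 := sub_ne_zero.2 (inv_ne_one.2 hq)
  unfold qDef
  generalize q⁻¹ = p at this ⊢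
  field_simp
  ring

lemma heineWeight_zero (t : ℝ) : heineWeight q t 0 = 1 := by simp [heineWeight, qFact]

lemma heineWeight_succ (t : ℝ) (x : ℕ) :
    heineWeight q t (x + 1) = heineWeight q t x * (q ^ x * t * (1 - q) / (1 - q ^ (x + 1))) := by
  have hfact : qFact q (x + 1) = qFact q x * ((1 - q ^ (x + 1)) / (1 - q)) := prod_range_succ _ _
  simp only [heineWeight, ← Nat.choose_two_right, Nat.choose_succ_succ', Nat.choose_one_right,
    hfact]
  generalize 1 - q ^ (x + 1) = a
  generalize 1 - q = b
  simp only [div_eq_mul_inv, mul_inv, inv_inv]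
  ring

lemma heineWeight_nonneg (hq0 : 0 ≤ q) (hq1 : q < 1) {t : ℝ} (ht : 0 ≤ t) (x : ℕ) :
    0 ≤ heineWeight q t x := by
  have := qFact_pos hq0 hq1 x
  unfold heineWeight
  positivity

lemma pow_mul_heineWeight (r t : ℝ) (x : ℕ) :
    r ^ x * heineWeight q t x = heineWeight q (r * t) x := by
  unfold heineWeight
  rw [mul_pow]
  ring

lemma qDef_mul_heineWeight_succ (hq0 : 0 < q) (hq1 : q < 1) (t : ℝ) (x : ℕ) :
    qDef q (x + 1) * heineWeight q t (x + 1) = t * heineWeight q t x := by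
  have h1 : 1 - q ^ (x + 1) ≠ 0 := (sub_pos.2 (pow_lt_one₀ hq0.le hq1 x.succ_ne_zero)).ne'
  have h2 : q⁻¹ - 1 ≠ 0 := sub_ne_zero.2 (inv_ne_one.2 hq1.ne)
  have h3 : 1 - q ≠ 0 := sub_ne_zero.2 hq1.ne'
  have h4 : q ≠ 0 := hq0.ne'
  rw [heineWeight_succ, qDef, inv_pow]
  field_simp
  ring

lemma summable_heineWeight (hq0 : 0 ≤ q) (hq1 : q < 1) (t : ℝ) : Summable (heineWeight q t) := by
  refine summable_of_ratio_norm_eventually_le (r := 1 / 2) (by norm_num) ?_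
  have hlim : Tendsto (fun x => q ^ x * |t|) atTop (𝓝 0) := by
    simpa using (tendsto_pow_atTop_nhds_zero_of_lt_one hq0 hq1).mul_const |t|
  filter_upwards [hlim.eventually (ge_mem_nhds (by norm_num : (0 : ℝ) < 1 / 2))] with x hx
  have hden : 0 < 1 - q ^ (x + 1) := sub_pos.2 (pow_lt_one₀ hq0 hq1 x.succ_ne_zero)
  -- `(1 - q) / (1 - q^(x+1)) ≤ 1` because `q^(x+1) ≤ q`
  have hfrac : (1 - q) / (1 - q ^ (x + 1)) ≤ 1 := by
    rw [div_le_one hden, sub_le_sub_iff_left]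
    exact pow_le_of_le_one hq0 hq1.le x.succ_ne_zero
  have hratio : ‖q ^ x * t * (1 - q) / (1 - q ^ (x + 1))‖ ≤ q ^ x * |t| := by
    rw [mul_div_assoc, norm_mul, Real.norm_eq_abs, Real.norm_of_nonneg
      (div_nonneg (sub_nonneg.2 hq1.le) hden.le), abs_mul, abs_of_nonneg (pow_nonneg hq0 x)]
    exact mul_le_of_le_one_right (by positivity) hfrac
  rw [heineWeight_succ, norm_mul, mul_comm]
  gcongr
  exact hratio.trans hx

lemma summable_qDef_mul {f : ℕ → ℝ} (hf : Summable f) (hf' : Summable fun x => q⁻¹ ^ x * f x) :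
    Summable fun x => qDef q x * f x := by
  simpa only [qDef, div_mul_eq_mul_div, sub_mul, one_mul] using (hf'.sub hf).div_const (q⁻¹ - 1)

lemma summable_qDef_mul_heineWeight (hq0 : 0 ≤ q) (hq1 : q < 1) (t : ℝ) :
    Summable fun x => qDef q x * heineWeight q t x :=
  summable_qDef_mul (summable_heineWeight hq0 hq1 t)
    (by simpa only [pow_mul_heineWeight] using summable_heineWeight hq0 hq1 (q⁻¹ * t))

lemma summable_qDef_sq_mul_heineWeight (hq0 : 0 ≤ q) (hq1 : q < 1) (t : ℝ) :
    Summable fun x => qDef q x ^ 2 * heineWeight q t x := by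
  have := summable_qDef_mul (summable_qDef_mul_heineWeight hq0 hq1 t)
    (by simpa only [mul_left_comm _ (qDef q _), pow_mul_heineWeight]
      using summable_qDef_mul_heineWeight hq0 hq1 (q⁻¹ * t))
  simpa only [sq, mul_assoc] using this

lemma tsum_mul_qDef_mul_heineWeight (hq0 : 0 < q) (hq1 : q < 1) (t : ℝ) (g : ℕ → ℝ)
    (hg : Summable fun x => g x * (qDef q x * heineWeight q t x)) :
    ∑' x, g x * (qDef q x * heineWeight q t x) = t * ∑' x, g (x + 1) * heineWeight q t x := by
  rw [hg.tsum_eq_zero_add, qDef_zero, zero_mul, mul_zero, zero_add, ← tsum_mul_left]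
  exact tsum_congr fun x => by rw [qDef_mul_heineWeight_succ hq0 hq1]; ring

lemma tsum_qDef_mul_heineWeight (hq0 : 0 < q) (hq1 : q < 1) (t : ℝ) :
    ∑' x, qDef q x * heineWeight q t x = t * ∑' x, heineWeight q t x := by
  simpa only [one_mul] using tsum_mul_qDef_mul_heineWeight hq0 hq1 t (fun _ => 1)
    (by simpa only [one_mul] using summable_qDef_mul_heineWeight hq0.le hq1 t)

lemma tsum_qDef_sq_mul_heineWeight (hq0 : 0 < q) (hq1 : q < 1) (t : ℝ) :
    ∑' x, qDef q x ^ 2 * heineWeight q t x = (t + q⁻¹ * t ^ 2) * ∑' x, heineWeight q t x := by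
  have hw := summable_heineWeight hq0.le hq1 t
  have hdw := summable_qDef_mul_heineWeight hq0.le hq1 t
  calc ∑' x, qDef q x ^ 2 * heineWeight q t x
      = ∑' x, qDef q x * (qDef q x * heineWeight q t x) := by simp only [sq, mul_assoc]
    _ = t * ∑' x, qDef q (x + 1) * heineWeight q t x :=
        tsum_mul_qDef_mul_heineWeight hq0 hq1 t _
          (by simpa only [sq, mul_assoc] using summable_qDef_sq_mul_heineWeight hq0.le hq1 t)
    _ = t * ∑' x, (heineWeight q t x + q⁻¹ * (qDef q x * heineWeight q t x)) := by
        simp only [qDef_succ hq1.ne, add_mul, one_mul, mul_assoc]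
    _ = (t + q⁻¹ * t ^ 2) * ∑' x, heineWeight q t x := by
        rw [hw.tsum_add (hdw.mul_left _), tsum_mul_left, tsum_qDef_mul_heineWeight hq0 hq1]
        ring

lemma tsum_sq_qDef_sub_mul_heineWeight (hq0 : 0 < q) (hq1 : q < 1) (t : ℝ) :
    ∑' x, (qDef q x - t) ^ 2 * heineWeight q t x =
      ((q⁻¹ - 1) * t ^ 2 + t) * ∑' x, heineWeight q t x := by
  have hw := summable_heineWeight hq0.le hq1 t
  have hdw := summable_qDef_mul_heineWeight hq0.le hq1 t
  have hd2w := summable_qDef_sq_mul_heineWeight hq0.le hq1 t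
  calc ∑' x, (qDef q x - t) ^ 2 * heineWeight q t x
      = ∑' x, (qDef q x ^ 2 * heineWeight q t x - 2 * t * (qDef q x * heineWeight q t x)
          + t ^ 2 * heineWeight q t x) := tsum_congr fun x => by ring
    _ = ∑' x, qDef q x ^ 2 * heineWeight q t x - 2 * t * ∑' x, qDef q x * heineWeight q t x
          + t ^ 2 * ∑' x, heineWeight q t x := by
        rw [(hd2w.sub (hdw.mul_left _)).tsum_add (hw.mul_left _), hd2w.tsum_sub (hdw.mul_left _),
          tsum_mul_left, tsum_mul_left]
    _ = ((q⁻¹ - 1) * t ^ 2 + t) * ∑' x, heineWeight q t x := by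
        rw [tsum_qDef_sq_mul_heineWeight hq0 hq1, tsum_qDef_mul_heineWeight hq0 hq1]
        ring

lemma tsum_heineWeight_eq_mul (hq0 : 0 ≤ q) (hq1 : q < 1) (t : ℝ) :
    ∑' x, heineWeight q t x = (1 + t * (1 - q)) * ∑' x, heineWeight q (q * t) x := by
  have hw := summable_heineWeight hq0 hq1 t
  have hw' := summable_heineWeight hq0 hq1 (q * t)
  have hdiff (x : ℕ) : heineWeight q t (x + 1) - heineWeight q (q * t) (x + 1) =
      t * (1 - q) * heineWeight q (q * t) x := by
    have : 1 - q ^ (x + 1) ≠ 0 := (sub_pos.2 (pow_lt_one₀ hq0 hq1 x.succ_ne_zero)).ne'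
    rw [← pow_mul_heineWeight, ← pow_mul_heineWeight, heineWeight_succ]
    field_simp
  have : ∑' x, heineWeight q t x - ∑' x, heineWeight q (q * t) x =
      t * (1 - q) * ∑' x, heineWeight q (q * t) x := by
    rw [← hw.tsum_sub hw', (hw.sub hw').tsum_eq_zero_add, heineWeight_zero, heineWeight_zero,
      sub_self, zero_add, ← tsum_mul_left]
    exact tsum_congr hdiff
  linear_combination this

lemma tsum_heineWeight_eq_prod_mul (hq0 : 0 ≤ q) (hq1 : q < 1) (t : ℝ) (N : ℕ) :
    ∑' x, heineWeight q t x =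
      (∏ i ∈ range N, (1 + t * (1 - q) * q ^ i)) * ∑' x, heineWeight q (q ^ N * t) x := by
  induction N with
  | zero => simp
  | succ n ih =>
    rw [ih, tsum_heineWeight_eq_mul hq0 hq1 (q ^ n * t), ← mul_assoc q, ← pow_succ',
      prod_range_succ]
    ring

lemma tendsto_tsum_heineWeight_pow_mul (hq0 : 0 ≤ q) (hq1 : q < 1) (t : ℝ) :
    Tendsto (fun N => ∑' x, heineWeight q (q ^ N * t) x) atTop (𝓝 1) := by
  have hw0 : ∑' x, heineWeight q (0 * t) x = 1 := by
    rw [tsum_eq_single 0 fun x hx => by simp [heineWeight, hx], heineWeight_zero]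
  have hq : Tendsto (fun N => q ^ N) atTop (𝓝 0) := tendsto_pow_atTop_nhds_zero_of_lt_one hq0 hq1
  rw [← hw0]
  refine tendsto_tsum_of_dominated_convergence (summable_heineWeight hq0 hq1 t).abs
    (fun x => ?_) (Eventually.of_forall fun N x => ?_)
  · simp only [← pow_mul_heineWeight]
    exact (hq.pow x).mul_const _
  · rw [← pow_mul_heineWeight, norm_mul, Real.norm_eq_abs, Real.norm_eq_abs,
      abs_of_nonneg (by positivity)]
    exact mul_le_of_le_one_left (abs_nonneg _) (pow_le_one₀ (by positivity)
      (pow_le_one₀ hq0 hq1.le))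

theorem tsum_heineWeight (hq0 : 0 ≤ q) (hq1 : q < 1) (t : ℝ) :
    ∑' x, heineWeight q t x = ∏' i : ℕ, (1 + t * (1 - q) * q ^ i) := by
  have hprod : Tendsto (fun N => ∏ i ∈ range N, (1 + t * (1 - q) * q ^ i)) atTop
      (𝓝 (∏' i : ℕ, (1 + t * (1 - q) * q ^ i))) :=
    (Real.multipliable_one_add_of_summable
      ((summable_geometric_of_lt_one hq0 hq1).mul_left _)).hasProd.tendsto_prod_nat
  have := (hprod.mul (tendsto_tsum_heineWeight_pow_mul hq0 hq1 t)).congr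
    fun N => (tsum_heineWeight_eq_prod_mul hq0 hq1 t N).symm
  rw [mul_one] at this
  exact tendsto_nhds_unique tendsto_const_nhds this

lemma one_le_tsum_heineWeight (hq0 : 0 ≤ q) (hq1 : q < 1) {t : ℝ} (ht : 0 ≤ t) :
    1 ≤ ∑' x, heineWeight q t x := by
  simpa only [heineWeight_zero] using (summable_heineWeight hq0 hq1 t).le_tsum 0
    fun x _ => heineWeight_nonneg hq0 hq1 ht x

/-- **Variance of the deformed Heine variable**:
`V([X]_{1/q}) = (1-q)/q · λ² + λ`. -/
theorem heine_deformed_variance (q lam : ℝ) (hq0 : 0 < q) (hq1 : q < 1) (hlam : 0 < lam) :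
    ∑' x : ℕ,
      (qDef q x - lam) ^ 2 * (q ^ (x * (x - 1) / 2) * lam ^ x / qFact q x *
        (∏' i : ℕ, (1 + lam * (1 - q) * q ^ i))⁻¹) = (1 - q) / q * lam ^ 2 + lam := by
  set H := ∏' i : ℕ, (1 + lam * (1 - q) * q ^ i)
  have hE : ∑' x, heineWeight q lam x = H := tsum_heineWeight hq0.le hq1 lam
  have hH : H ≠ 0 := by
    rw [← hE]
    exact (one_pos.trans_le (one_le_tsum_heineWeight hq0.le hq1 hlam.le)).ne'
  calc _ = ∑' x, (qDef q x - lam) ^ 2 * heineWeight q lam x * H⁻¹ :=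
        tsum_congr fun x => (mul_assoc _ _ _).symm
    _ = (1 - q) / q * lam ^ 2 + lam := by
        rw [tsum_mul_right, tsum_sq_qDef_sub_mul_heineWeight hq0 hq1, hE]
        field_simp
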